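/- For all integers m ≥ 1 and even n = 2k ≥ 2 with m + n ≥ 3, the spider Sp(1^[m], 2^[n]) admits a local antimagic total labeling f : V ∪ E → {1,...,2m+8k+1} with exactly 3 distinct vertex weights, namely w(u_j) = 2m + 11k + 2 for all j, w(y_i) = w(v_j) = 2m + 8k + 1 for all i, j, and w(x) = (2m+7k+1) + m(3m+8k+1)/2 + k(4m+14k+2). -/
import Mathlib


open Finset

variable {V : Type*} [Fintype V] [DecidableEq V]

/-- The weight of a vertex `u` under the total labeling given by vertex labels `fv`
and edge labels `fe` : `w(u) = f(u) + \sum_{e incident to u} f(e)`. -/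
def latWeight (G : SimpleGraph V) [DecidableRel G.Adj]
    (fv : V → ℕ) (fe : Sym2 V → ℕ) (u : V) : ℕ :=
  fv u + ∑ v ∈ G.neighborFinset u, fe s(u, v)

/-- `fv, fe` together form a bijection from `V(G) ∪ E(G)` onto `{1, …, p + q}`,
where `p` is the order and `q` is the size of `G`. -/
def IsTotalLabeling (G : SimpleGraph V) [DecidableRel G.Adj]
    (fv : V → ℕ) (fe : Sym2 V → ℕ) : Prop :=
  Set.BijOn (Sum.elim fv (fun e : G.edgeSet => fe (e : Sym2 V))) Set.univ
    (Set.Icc 1 (Fintype.card V + G.edgeFinset.card))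

/-- A local antimagic total labeling of `G` : a bijective total labeling such that any two
adjacent vertices get distinct weights. -/
def IsLocalAntimagicTotal (G : SimpleGraph V) [DecidableRel G.Adj]
    (fv : V → ℕ) (fe : Sym2 V → ℕ) : Prop :=
  IsTotalLabeling G fv fe ∧
    ∀ ⦃u v : V⦄, G.Adj u v → latWeight G fv fe u ≠ latWeight G fv fe v

/-- The local antimagic total chromatic number `χ_lat(G)` : the minimum number of distinct
vertex weights taken over all local antimagic total labelings of `G`. -/
noncomputable def chiLat (G : SimpleGraph V) [DecidableRel G.Adj] : ℕ :=
  sInf {c | ∃ fv fe, IsLocalAntimagicTotal G fv fe ∧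
    (Finset.univ.image (latWeight G fv fe)).card = c}

instance {W : Type*} (r : W → W → Prop) [DecidableEq W] [DecidableRel r] :
    DecidableRel (SimpleGraph.fromRel r).Adj :=
  fun a b => decidable_of_iff _ (SimpleGraph.fromRel_adj r a b).symm

/-- Adjacency for the spider `Sp(1^[m], 2^[n])` : the center `x = none` is adjacent to each
leaf `y i = some (Sum.inl i)` and to each `u j = some (Sum.inr (j, false))`, and each `u j`
is adjacent to the leaf `v j = some (Sum.inr (j, true))`. -/
def spider12R (m n : ℕ) :
    Option (Fin m ⊕ Fin n × Bool) → Option (Fin m ⊕ Fin n × Bool) → Bool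
  | none, some (Sum.inl _) => true
  | none, some (Sum.inr (_, false)) => true
  | some (Sum.inr (j, false)), some (Sum.inr (j', true)) => decide (j = j')
  | _, _ => false

/-- The spider `Sp(1^[m], 2^[n])` with `m` legs of length `1` and `n` legs of length `2`. -/
abbrev spider12 (m n : ℕ) : SimpleGraph (Option (Fin m ⊕ Fin n × Bool)) :=
  SimpleGraph.fromRel (fun a b => spider12R m n a b = true)
namespace SpAux

@[simp] lemma r_none_none (m n : ℕ) :
    spider12R m n (none : Option (Fin m ⊕ Fin n × Bool)) none = false := rfl
@[simp] lemma r_x_y (m n : ℕ) (i : Fin m) :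
    spider12R m n none (some (Sum.inl i)) = true := rfl
@[simp] lemma r_x_uv (m n : ℕ) (j : Fin n) (b : Bool) :
    spider12R m n none (some (Sum.inr (j, b))) = !b := by cases b <;> rfl
@[simp] lemma r_y_none (m n : ℕ) (i : Fin m) :
    spider12R m n (some (Sum.inl i)) none = false := rfl
@[simp] lemma r_uv_none (m n : ℕ) (j : Fin n) (b : Bool) :
    spider12R m n (some (Sum.inr (j, b))) none = false := by cases b <;> rfl

lemma adj_iff (m n : ℕ) (a b : Option (Fin m ⊕ Fin n × Bool)) :
    (spider12 m n).Adj a b ↔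
      a ≠ b ∧ (spider12R m n a b = true ∨ spider12R m n b a = true) :=
  SimpleGraph.fromRel_adj _ a b

lemma adj_x_y (m n : ℕ) (i : Fin m) :
    (spider12 m n).Adj none (some (Sum.inl i)) := by
  rw [adj_iff]; exact ⟨by simp, Or.inl rfl⟩

lemma adj_x_u (m n : ℕ) (j : Fin n) :
    (spider12 m n).Adj none (some (Sum.inr (j, false))) := by
  rw [adj_iff]; exact ⟨by simp, Or.inl rfl⟩

lemma adj_u_v (m n : ℕ) (j : Fin n) :
    (spider12 m n).Adj (some (Sum.inr (j, false))) (some (Sum.inr (j, true))) := by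
  rw [adj_iff]
  refine ⟨by simp, Or.inl ?_⟩
  show decide (j = j) = true
  simp

lemma adj_cases (m n : ℕ) {a b : Option (Fin m ⊕ Fin n × Bool)}
    (h : (spider12 m n).Adj a b) :
    (∃ i, a = none ∧ b = some (Sum.inl i)) ∨
    (∃ i, b = none ∧ a = some (Sum.inl i)) ∨
    (∃ j, a = none ∧ b = some (Sum.inr (j, false))) ∨
    (∃ j, b = none ∧ a = some (Sum.inr (j, false))) ∨
    (∃ j, a = some (Sum.inr (j, false)) ∧ b = some (Sum.inr (j, true))) ∨
    (∃ j, b = some (Sum.inr (j, false)) ∧ a = some (Sum.inr (j, true))) := by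
  rw [adj_iff] at h
  obtain ⟨hne, h | h⟩ := h <;>
  · rcases a with _ | (i | ⟨j, _ | _⟩) <;> rcases b with _ | (i' | ⟨j', _ | _⟩) <;>
      simp_all [spider12R]

lemma nbhd_y (m n : ℕ) (i : Fin m) :
    (spider12 m n).neighborFinset (some (Sum.inl i)) = {none} := by
  ext c
  simp only [SimpleGraph.mem_neighborFinset, Finset.mem_singleton]
  constructor
  · intro h
    rcases adj_cases m n h with ⟨i',h1,h2⟩|⟨i',h1,h2⟩|⟨j,h1,h2⟩|⟨j,h1,h2⟩|⟨j,h1,h2⟩|⟨j,h1,h2⟩ <;>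
      simp_all
  · rintro rfl; exact ((adj_x_y m n i).symm)

lemma nbhd_v (m n : ℕ) (j : Fin n) :
    (spider12 m n).neighborFinset (some (Sum.inr (j, true))) = {some (Sum.inr (j, false))} := by
  ext c
  simp only [SimpleGraph.mem_neighborFinset, Finset.mem_singleton]
  constructor
  · intro h
    rcases adj_cases m n h with ⟨i',h1,h2⟩|⟨i',h1,h2⟩|⟨j',h1,h2⟩|⟨j',h1,h2⟩|⟨j',h1,h2⟩|⟨j',h1,h2⟩ <;>
      simp_all
  · rintro rfl; exact ((adj_u_v m n j).symm)

lemma nbhd_u (m n : ℕ) (j : Fin n) :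
    (spider12 m n).neighborFinset (some (Sum.inr (j, false))) =
      {none, some (Sum.inr (j, true))} := by
  ext c
  simp only [SimpleGraph.mem_neighborFinset, Finset.mem_insert, Finset.mem_singleton]
  constructor
  · intro h
    rcases adj_cases m n h with ⟨i',h1,h2⟩|⟨i',h1,h2⟩|⟨j',h1,h2⟩|⟨j',h1,h2⟩|⟨j',h1,h2⟩|⟨j',h1,h2⟩ <;>
      simp_all
  · rintro (rfl | rfl)
    · exact (adj_x_u m n j).symm
    · exact adj_u_v m n j

lemma sum_nbhd_x (m n : ℕ) (F : Option (Fin m ⊕ Fin n × Bool) → ℕ) :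
    ∑ c ∈ (spider12 m n).neighborFinset none, F c =
      (∑ i : Fin m, F (some (Sum.inl i))) +
      (∑ j : Fin n, F (some (Sum.inr (j, false)))) := by
  rw [SimpleGraph.neighborFinset_eq_filter, Finset.sum_filter]
  rw [Fintype.sum_option]
  rw [Fintype.sum_sum_type]
  simp only [Fintype.sum_prod_type, Fintype.sum_bool]
  simp

lemma edge_forms (m n : ℕ) {e : Sym2 (Option (Fin m ⊕ Fin n × Bool))}
    (he : e ∈ (spider12 m n).edgeSet) :
    (∃ i, e = s(none, some (Sum.inl i))) ∨
    (∃ j, e = s(none, some (Sum.inr (j, false)))) ∨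
    (∃ j, e = s(some (Sum.inr (j, false)), some (Sum.inr (j, true)))) := by
  induction e with
  | _ a b =>
    rw [SimpleGraph.mem_edgeSet] at he
    rcases adj_cases m n he with ⟨i,h1,h2⟩|⟨i,h1,h2⟩|⟨j,h1,h2⟩|⟨j,h1,h2⟩|⟨j,h1,h2⟩|⟨j,h1,h2⟩ <;>
      subst h1 <;> subst h2
    · exact Or.inl ⟨i, rfl⟩
    · exact Or.inl ⟨i, Sym2.eq_swap⟩
    · exact Or.inr (Or.inl ⟨j, rfl⟩)
    · exact Or.inr (Or.inl ⟨j, Sym2.eq_swap⟩)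
    · exact Or.inr (Or.inr ⟨j, rfl⟩)
    · exact Or.inr (Or.inr ⟨j, Sym2.eq_swap⟩)

def fV (m k : ℕ) : Option (Fin m ⊕ Fin (2*k) × Bool) → ℕ
  | none => 2*m+7*k+1
  | some (Sum.inl i) => m+4*k-i.val
  | some (Sum.inr (j, false)) => if j.val < k then 2*(k-j.val) else 4*k-1-2*j.val
  | some (Sum.inr (j, true)) => if j.val < k then 2*m+5*k-j.val else 2*m+7*k-j.val

def hE (m k : ℕ) :
    Option (Fin m ⊕ Fin (2*k) × Bool) → Option (Fin m ⊕ Fin (2*k) × Bool) → ℕ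
  | none, some (Sum.inl i) => m+4*k+1+i.val
  | none, some (Sum.inr (j, false)) =>
      if j.val < k then 2*m+6*k+1+j.val else 2*m+6*k+2+j.val
  | some (Sum.inr (j, false)), some (Sum.inr (j', true)) =>
      if j = j' then (if j.val < k then 3*k+1+j.val else k+1+j.val) else 0
  | _, _ => 0

def fE (m k : ℕ) : Sym2 (Option (Fin m ⊕ Fin (2*k) × Bool)) → ℕ :=
  Sym2.lift ⟨fun a b => hE m k a b + hE m k b a, fun _ _ => add_comm _ _⟩

lemma w_y (m k : ℕ) (i : Fin m) :
    latWeight (spider12 m (2*k)) (fV m k) (fE m k) (some (Sum.inl i)) = 2*m+8*k+1 := by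
  have hi := i.isLt
  rw [latWeight, nbhd_y, Finset.sum_singleton]
  simp only [fV, fE, hE, Sym2.lift_mk]
  omega

lemma w_v (m k : ℕ) (j : Fin (2*k)) :
    latWeight (spider12 m (2*k)) (fV m k) (fE m k) (some (Sum.inr (j, true))) = 2*m+8*k+1 := by
  have hj := j.isLt
  rw [latWeight, nbhd_v, Finset.sum_singleton]
  simp only [fV, fE, hE, Sym2.lift_mk, if_pos rfl]
  split_ifs <;> omega

lemma w_u (m k : ℕ) (j : Fin (2*k)) :
    latWeight (spider12 m (2*k)) (fV m k) (fE m k) (some (Sum.inr (j, false))) = 2*m+11*k+2 := by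
  have hj := j.isLt
  rw [latWeight, nbhd_u, Finset.sum_pair
    (by simp : (none : Option (Fin m ⊕ Fin (2*k) × Bool)) ≠ some (Sum.inr (j, true)))]
  simp only [fV, fE, hE, Sym2.lift_mk, if_pos rfl]
  split_ifs <;> omega

lemma two_mul_sum_shift (a n : ℕ) :
    2 * (∑ i ∈ Finset.range n, (a + i)) + n = 2*a*n + n*n := by
  induction n with
  | zero => simp
  | succ p ih =>
    rw [Finset.sum_range_succ]
    have : 2*a*(p+1) + (p+1)*(p+1) = (2*a*p + p*p) + (2*a + 2*p + 1) := by ring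
    omega

lemma sum_range_xy (m k : ℕ) :
    2 * (∑ i : Fin m, (m+4*k+1+i.val)) = m * (3*m + 8*k + 1) := by
  rw [Fin.sum_univ_eq_sum_range fun i => m+4*k+1+i]
  have h := two_mul_sum_shift (m+4*k+1) m
  ring_nf at h ⊢
  linarith

lemma sum_range_xu (m k : ℕ) :
    2 * (∑ j : Fin (2*k), (if j.val < k then 2*m+6*k+1+j.val else 2*m+6*k+2+j.val)) =
      2 * (k * (4*m + 14*k + 2)) := by
  rw [Fin.sum_univ_eq_sum_range fun j => if j < k then 2*m+6*k+1+j else 2*m+6*k+2+j]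
  rw [Finset.range_eq_Ico, ← Finset.sum_Ico_consecutive _ (Nat.zero_le k) (by omega : k ≤ 2*k)]
  rw [Finset.sum_congr rfl (fun x hx => if_pos (Finset.mem_Ico.mp hx).2),
      Finset.sum_congr (rfl : Finset.Ico k (2*k) = Finset.Ico k (2*k))
        (fun x hx => if_neg (by have := (Finset.mem_Ico.mp hx).1; omega))]
  rw [Nat.Ico_zero_eq_range, Finset.sum_Ico_eq_sum_range]
  have h2 : 2*k - k = k := by omega
  rw [h2]
  have e : ∀ x ∈ Finset.range k, 2*m+6*k+2+(k+x) = (2*m+7*k+2) + x := fun x _ => by omega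
  rw [Finset.sum_congr rfl e]
  have h1 := two_mul_sum_shift (2*m+6*k+1) k
  have h3 := two_mul_sum_shift (2*m+7*k+2) k
  ring_nf at h1 h3 ⊢
  linarith

lemma w_x (m k : ℕ) :
    2 * latWeight (spider12 m (2*k)) (fV m k) (fE m k) none =
      2 * (2*m+7*k+1) + m * (3*m+8*k+1) + 2 * (k * (4*m+14*k+2)) := by
  rw [latWeight, sum_nbhd_x m (2*k) (fun c => fE m k s(none, c))]
  have e1 : ∀ i : Fin m, fE m k s(none, some (Sum.inl i)) = m+4*k+1+i.val := by
    intro i; simp [fE, hE]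
  have e2 : ∀ j : Fin (2*k), fE m k s(none, some (Sum.inr (j, false))) =
      if j.val < k then 2*m+6*k+1+j.val else 2*m+6*k+2+j.val := by
    intro j; simp [fE, hE]
  rw [Finset.sum_congr rfl (fun i _ => e1 i), Finset.sum_congr rfl (fun j _ => e2 j)]
  have := sum_range_xy m k
  have := sum_range_xu m k
  simp only [fV]
  omega

lemma fV_inj (m k : ℕ) : Function.Injective (fV m k) := by
  intro a b h
  rcases a with _ | (i | ⟨j, b1⟩) <;> rcases b with _ | (i' | ⟨j', b2⟩) <;>
    (try cases b1) <;> (try cases b2) <;> simp only [fV] at h <;>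
    (try have hi := i.isLt) <;> (try have hi' := i'.isLt) <;>
    (try have hj := j.isLt) <;> (try have hj' := j'.isLt) <;>
    first
      | rfl
      | (exfalso; first | (split_ifs at h <;> omega) | omega)
      | (obtain rfl : i = i' := by apply Fin.ext; first | (split_ifs at h <;> omega) | omega
         rfl)
      | (obtain rfl : j = j' := by apply Fin.ext; first | (split_ifs at h <;> omega) | omega
         rfl)

end SpAux
namespace SpAux

lemma deg_x (m n : ℕ) : (spider12 m n).degree none = m + n := by
  rw [SimpleGraph.degree, Finset.card_eq_sum_ones, sum_nbhd_x m n (fun _ => 1)]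
  simp [mul_comm]

lemma deg_y (m n : ℕ) (i : Fin m) : (spider12 m n).degree (some (Sum.inl i)) = 1 := by
  rw [SimpleGraph.degree, nbhd_y]; rfl

lemma deg_u (m n : ℕ) (j : Fin n) :
    (spider12 m n).degree (some (Sum.inr (j, false))) = 2 := by
  rw [SimpleGraph.degree, nbhd_u]
  rw [Finset.card_pair (by simp)]

lemma deg_v (m n : ℕ) (j : Fin n) :
    (spider12 m n).degree (some (Sum.inr (j, true))) = 1 := by
  rw [SimpleGraph.degree, nbhd_v]; rfl

lemma card_edges (m n : ℕ) : (spider12 m n).edgeFinset.card = m + 2*n := by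
  have h := SimpleGraph.sum_degrees_eq_twice_card_edges (spider12 m n)
  rw [Fintype.sum_option, Fintype.sum_sum_type] at h
  simp only [Fintype.sum_prod_type, Fintype.sum_bool, deg_x, deg_y, deg_u, deg_v,
    Finset.sum_const, Finset.card_univ, Fintype.card_fin, smul_eq_mul, mul_one] at h
  omega

lemma card_VT (m k : ℕ) :
    Fintype.card (Option (Fin m ⊕ Fin (2*k) × Bool)) = m + 4*k + 1 := by
  simp [Fintype.card_option, Fintype.card_sum, Fintype.card_prod]
  ring

lemma fV_ne_fE (m k : ℕ) (a : Option (Fin m ⊕ Fin (2*k) × Bool))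
    {e : Sym2 (Option (Fin m ⊕ Fin (2*k) × Bool))}
    (he : e ∈ (spider12 m (2*k)).edgeSet) : fV m k a ≠ fE m k e := by
  intro h
  rcases edge_forms m (2*k) he with ⟨i', rfl⟩ | ⟨j', rfl⟩ | ⟨j', rfl⟩ <;>
    rcases a with _ | (i | ⟨j, b1⟩) <;> (try cases b1) <;>
    simp only [fV, fE, hE, Sym2.lift_mk, if_pos rfl, add_zero, zero_add] at h <;>
    (try have hi := i.isLt) <;> (try have hi' := i'.isLt) <;>
    (try have hj := j.isLt) <;> (try have hj' := j'.isLt) <;>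
    first | (split_ifs at h <;> omega) | omega

lemma total (m k : ℕ) (hm : 1 ≤ m) (hk : 1 ≤ k) :
    IsTotalLabeling (spider12 m (2*k)) (fV m k) (fE m k) := by
  set G := spider12 m (2*k) with hG
  set F := Sum.elim (fV m k) (fun e : G.edgeSet => fE m k (e : Sym2 _)) with hF
  have hN : Fintype.card (Option (Fin m ⊕ Fin (2*k) × Bool)) + G.edgeFinset.card
      = 2*m+8*k+1 := by
    rw [card_VT, card_edges]; omega
  rw [IsTotalLabeling, hN]
  have hmaps : Set.MapsTo F Set.univ (Set.Icc 1 (2*m+8*k+1)) := by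
    rintro (a | ⟨e, he⟩) -
    · rcases a with _ | (i | ⟨j, b1⟩) <;> (try cases b1) <;>
        simp only [hF, Sum.elim_inl, fV, Set.mem_Icc] <;>
        (try have hi := i.isLt) <;> (try have hj := j.isLt) <;>
        first | (split_ifs <;> omega) | omega
    · rcases edge_forms m (2*k) he with ⟨i', rfl⟩ | ⟨j', rfl⟩ | ⟨j', rfl⟩ <;>
        simp only [hF, Sum.elim_inr, fE, hE, Sym2.lift_mk, if_pos rfl, add_zero, zero_add,
          Set.mem_Icc] <;>
        (try have hi' := i'.isLt) <;> (try have hj' := j'.isLt) <;>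
        first | (split_ifs <;> omega) | omega
  have hinj : Set.InjOn F Set.univ := by
    rintro (a | ⟨e, he⟩) - (b | ⟨e', he'⟩) - h
    · simp only [hF, Sum.elim_inl] at h
      exact congrArg Sum.inl (fV_inj m k h)
    · exact absurd h (fV_ne_fE m k a he')
    · exact absurd h.symm (fV_ne_fE m k b he)
    · simp only [hF, Sum.elim_inr] at h
      rcases edge_forms m (2*k) he with ⟨i, rfl⟩ | ⟨j, rfl⟩ | ⟨j, rfl⟩ <;>
        rcases edge_forms m (2*k) he' with ⟨i', rfl⟩ | ⟨j', rfl⟩ | ⟨j', rfl⟩ <;>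
        simp only [fE, hE, Sym2.lift_mk, if_pos rfl, add_zero, zero_add] at h <;>
        (try have hi := i.isLt) <;> (try have hi' := i'.isLt) <;>
        (try have hj := j.isLt) <;> (try have hj' := j'.isLt) <;>
        first
          | (exfalso; first | (split_ifs at h <;> omega) | omega)
          | (obtain rfl : i = i' := by apply Fin.ext; first | (split_ifs at h <;> omega) | omega
             rfl)
          | (obtain rfl : j = j' := by apply Fin.ext; first | (split_ifs at h <;> omega) | omega
             rfl)
  refine ⟨hmaps, hinj, ?_⟩
  have himg : F '' Set.univ = Set.Icc 1 (2*m+8*k+1) := by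
    apply Set.eq_of_subset_of_ncard_le hmaps.image_subset
    have h1 : (F '' Set.univ).ncard
        = (Set.univ : Set (Option (Fin m ⊕ Fin (2*k) × Bool) ⊕ G.edgeSet)).ncard :=
      Set.ncard_image_of_injOn hinj
    have h2 : (Set.univ : Set (Option (Fin m ⊕ Fin (2*k) × Bool) ⊕ G.edgeSet)).ncard
        = 2*m+8*k+1 := by
      rw [Set.ncard_univ, Nat.card_eq_fintype_card, Fintype.card_sum,
        ← SimpleGraph.edgeFinset_card]
      rw [card_VT, card_edges]
      omega
    have h3 : (Set.Icc 1 (2*m+8*k+1)).ncard = 2*m+8*k+1 := by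
      rw [← Finset.coe_Icc, Set.ncard_coe_finset, Nat.card_Icc]
      omega
    omega
  show Set.Icc 1 (2*m+8*k+1) ⊆ F '' Set.univ
  rw [himg]

end SpAux
/-- For all `m ≥ 1` and even `n = 2k ≥ 2` with `m + n ≥ 3`, the spider `Sp(1^[m], 2^[n])`
admits a local antimagic total labeling (into `{1, …, 2m+8k+1}`) with exactly `3` distinct
vertex weights, namely `w(u_j) = 2m + 11k + 2`, `w(y_i) = w(v_j) = 2m + 8k + 1` and
`w(x) = (2m+7k+1) + m(3m+8k+1)/2 + k(4m+14k+2)` (stated multiplied by `2` to avoid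
division). -/
theorem spider12_even_three_weights (m k : ℕ) (hm : 1 ≤ m) (hk : 1 ≤ k)
    (hmn : 3 ≤ m + 2 * k) :
    ∃ fv fe, IsLocalAntimagicTotal (spider12 m (2 * k)) fv fe ∧
      (Finset.univ.image (latWeight (spider12 m (2 * k)) fv fe)).card = 3 ∧
      (∀ j : Fin (2 * k),
        latWeight (spider12 m (2 * k)) fv fe (some (Sum.inr (j, false))) =
          2 * m + 11 * k + 2) ∧
      (∀ i : Fin m,
        latWeight (spider12 m (2 * k)) fv fe (some (Sum.inl i)) = 2 * m + 8 * k + 1) ∧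
      (∀ j : Fin (2 * k),
        latWeight (spider12 m (2 * k)) fv fe (some (Sum.inr (j, true))) =
          2 * m + 8 * k + 1) ∧
      2 * latWeight (spider12 m (2 * k)) fv fe none =
        2 * (2 * m + 7 * k + 1) + m * (3 * m + 8 * k + 1) +
          2 * (k * (4 * m + 14 * k + 2)) := by

  classical
  have h2wx := SpAux.w_x m k
  have p1 : 3*m+8*k+1 ≤ m*(3*m+8*k+1) := Nat.le_mul_of_pos_left _ (by omega)
  have p2 : 4*m+14*k+2 ≤ k*(4*m+14*k+2) := Nat.le_mul_of_pos_left _ (by omega)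
  have hne1 : latWeight (spider12 m (2*k)) (SpAux.fV m k) (SpAux.fE m k) none
      ≠ 2*m+11*k+2 := by intro hh; rw [hh] at h2wx; linarith
  have hne2 : latWeight (spider12 m (2*k)) (SpAux.fV m k) (SpAux.fE m k) none
      ≠ 2*m+8*k+1 := by intro hh; rw [hh] at h2wx; linarith
  refine ⟨SpAux.fV m k, SpAux.fE m k, ⟨SpAux.total m k hm hk, ?_⟩, ?_, SpAux.w_u m k,
    SpAux.w_y m k, SpAux.w_v m k, SpAux.w_x m k⟩
  · intro a b hadj
    rcases SpAux.adj_cases m (2*k) hadj with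
      ⟨i,h1,h2⟩|⟨i,h1,h2⟩|⟨j,h1,h2⟩|⟨j,h1,h2⟩|⟨j,h1,h2⟩|⟨j,h1,h2⟩ <;> subst h1 <;> subst h2 <;>
      simp only [SpAux.w_y, SpAux.w_u, SpAux.w_v]
    · exact hne2
    · exact fun hh => hne2 hh.symm
    · exact hne1
    · exact fun hh => hne1 hh.symm
    · omega
    · omega
  · have himg : Finset.univ.image
          (latWeight (spider12 m (2*k)) (SpAux.fV m k) (SpAux.fE m k)) =
        {latWeight (spider12 m (2*k)) (SpAux.fV m k) (SpAux.fE m k) none,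
          2*m+11*k+2, 2*m+8*k+1} := by
      apply Finset.Subset.antisymm
      · intro w hw
        simp only [Finset.mem_image] at hw
        obtain ⟨a, -, rfl⟩ := hw
        rcases a with _ | (i | ⟨j, b1⟩) <;> (try cases b1) <;>
          simp [SpAux.w_y, SpAux.w_u, SpAux.w_v, Finset.mem_insert]
      · intro w hw
        simp only [Finset.mem_insert, Finset.mem_singleton] at hw
        simp only [Finset.mem_image]
        rcases hw with rfl | rfl | rfl
        · exact ⟨none, Finset.mem_univ _, rfl⟩
        · exact ⟨some (Sum.inr (⟨0, by omega⟩, false)), Finset.mem_univ _, SpAux.w_u m k _⟩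
        · exact ⟨some (Sum.inl ⟨0, by omega⟩), Finset.mem_univ _, SpAux.w_y m k _⟩
    rw [himg]
    rw [Finset.card_insert_of_notMem (by simp [hne1, hne2]),
      Finset.card_insert_of_notMem (by simp; omega), Finset.card_singleton]
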